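/- arXiv:2209.10990 — 4 statements merged into one kernel-verified Lean document; each statement's English description precedes it below -/
import Mathlib

section
/- Let (u_k)_{k≥0} be a real sequence such that the power series F_u(x) = Σ_{p≥0} u_p x^p has radius of convergence r > 0. Define U_n = ((−1)^n / n!) · Σ_{k=0}^n S(n,k) (−1)^k k! u_k. Then for all t ∈ [0, log(1+r)), the series Σ_{n≥0} U_n t^n converges and equals F_u(1 − e^{−t}) = Σ_{k≥0} u_k (1 − e^{−t})^k. -/
open Finset

/-- Stirling numbers of the second kind. -/
def S2 : ℕ → ℕ → ℕ
  | 0, 0 => 1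
  | 0, _ + 1 => 0
  | _ + 1, 0 => 0
  | n + 1, k + 1 => S2 n k + (k + 1) * S2 n (k + 1)

lemma S2_eq_zero : ∀ n k, n < k → S2 n k = 0
  | 0, _+1, _ => rfl
  | n+1, k+1, h => by
      have h1 : n < k := Nat.lt_of_succ_lt_succ h
      have h2 : n < k+1 := Nat.lt_of_succ_lt h
      simp [S2, S2_eq_zero n k h1, S2_eq_zero n (k+1) h2]

lemma A_pascal (n m : ℕ) :
    ∑ i ∈ range (m+1), (-1:ℝ)^i * (m.choose i) * ((i:ℝ)+1)^n
      = (∑ j ∈ range (m+1), (-1:ℝ)^j * (m.choose j) * (j:ℝ)^n)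
        - ∑ j ∈ range (m+2), (-1:ℝ)^j * ((m+1).choose j) * (j:ℝ)^n := by
  have h1 : ∑ j ∈ range (m+2), (-1:ℝ)^j * ((m+1).choose j) * (j:ℝ)^n
      = (∑ i ∈ range (m+1), (-1:ℝ)^(i+1) * ((m+1).choose (i+1)) * ((i:ℝ)+1)^n)
        + (0:ℝ)^n := by
    rw [Finset.sum_range_succ']
    push_cast
    simp
  have h2 : ∀ i, ((m+1).choose (i+1) : ℝ) = (m.choose i : ℝ) + (m.choose (i+1) : ℝ) := by
    intro i
    rw [Nat.choose_succ_succ]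
    push_cast; ring
  have h3 : ∑ j ∈ range (m+1), (-1:ℝ)^j * (m.choose j) * (j:ℝ)^n
      = (∑ i ∈ range m, (-1:ℝ)^(i+1) * (m.choose (i+1)) * ((i:ℝ)+1)^n) + (0:ℝ)^n := by
    rw [Finset.sum_range_succ']
    push_cast
    simp
  have h4 : ∑ i ∈ range (m+1), (-1:ℝ)^(i+1) * (m.choose (i+1)) * ((i:ℝ)+1)^n
      = ∑ i ∈ range m, (-1:ℝ)^(i+1) * (m.choose (i+1)) * ((i:ℝ)+1)^n := by
    rw [Finset.sum_range_succ, Nat.choose_succ_self]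
    simp
  rw [h1]
  have expand : ∑ i ∈ range (m+1), (-1:ℝ)^(i+1) * ((m+1).choose (i+1)) * ((i:ℝ)+1)^n
      = (∑ i ∈ range (m+1), (-1:ℝ)^(i+1) * (m.choose i) * ((i:ℝ)+1)^n)
        + ∑ i ∈ range (m+1), (-1:ℝ)^(i+1) * (m.choose (i+1)) * ((i:ℝ)+1)^n := by
    rw [← Finset.sum_add_distrib]
    refine Finset.sum_congr rfl fun i _ => ?_
    rw [h2]; ring
  rw [expand, h4, h3]
  have : ∑ i ∈ range (m+1), (-1:ℝ)^(i+1) * (m.choose i) * ((i:ℝ)+1)^n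
      = -∑ i ∈ range (m+1), (-1:ℝ)^i * (m.choose i) * ((i:ℝ)+1)^n := by
    rw [← Finset.sum_neg_distrib]
    exact Finset.sum_congr rfl fun i _ => by ring
  rw [this]
  ring

lemma A_eq (n : ℕ) : ∀ k, ∑ j ∈ range (k+1), (-1:ℝ)^j * (k.choose j) * (j:ℝ)^n
    = (-1:ℝ)^k * k.factorial * S2 n k := by
  induction n with
  | zero =>
    intro k
    rcases k with _ | m
    · simp [S2]
    · have h := Int.alternating_sum_range_choose_of_ne (Nat.succ_ne_zero m)
      have h' := congrArg (fun z : ℤ => (z : ℝ)) h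
      push_cast at h'
      have : ∑ j ∈ range (m+2), (-1:ℝ)^j * ((m+1).choose j) * (j:ℝ)^0 = 0 := by
        simpa using h'
      rw [this]
      simp [S2]
  | succ n ih =>
    intro k
    rcases k with _ | m
    · simp [S2]
    · have step : ∑ j ∈ range (m+2), (-1:ℝ)^j * ((m+1).choose j) * (j:ℝ)^(n+1)
          = -((m:ℝ)+1) * ∑ i ∈ range (m+1), (-1:ℝ)^i * (m.choose i) * ((i:ℝ)+1)^n := by
        rw [Finset.sum_range_succ']
        rw [Finset.mul_sum]
        simp only [Nat.cast_zero, zero_pow (Nat.succ_ne_zero n), mul_zero, add_zero]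
        refine Finset.sum_congr rfl fun i _ => ?_
        have hc : ((m:ℝ)+1) * (m.choose i : ℝ) = ((m+1).choose (i+1) : ℝ) * ((i:ℝ)+1) := by
          have := Nat.add_one_mul_choose_eq m i
          have := congrArg (fun z : ℕ => (z : ℝ)) this
          push_cast at this
          linarith [this]
        push_cast
        calc (-1:ℝ)^(i+1) * ((m+1).choose (i+1)) * ((i:ℝ)+1)^(n+1)
            = (-1:ℝ)^(i+1) * (((m+1).choose (i+1) : ℝ) * ((i:ℝ)+1)) * ((i:ℝ)+1)^n := by ring
          _ = (-1:ℝ)^(i+1) * (((m:ℝ)+1) * (m.choose i : ℝ)) * ((i:ℝ)+1)^n := by rw [← hc]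
          _ = -((m:ℝ)+1) * ((-1:ℝ)^i * (m.choose i) * ((i:ℝ)+1)^n) := by
              rw [pow_succ]; ring
      rw [step, A_pascal, ih m, ih (m+1)]
      show _ = (-1:ℝ)^(m+1) * ((m+1).factorial : ℝ) * (S2 (n+1) (m+1) : ℕ)
      rw [show S2 (n+1) (m+1) = S2 n m + (m+1) * S2 n (m+1) from rfl]
      push_cast [Nat.factorial_succ]
      ring

lemma hasSum_stirling (k : ℕ) (t : ℝ) :
    HasSum (fun n => ((-1:ℝ)^(n+k) * k.factorial * S2 n k) * t^n / n.factorial)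
      ((1 - Real.exp (-t))^k) := by
  have hj : ∀ j : ℕ, HasSum (fun n => (-(j:ℝ)*t)^n / n.factorial) (Real.exp (-(j:ℝ)*t)) := by
    intro j
    rw [Real.exp_eq_exp_ℝ]
    exact NormedSpace.expSeries_div_hasSum_exp _
  have h1 : HasSum
      (fun n => ∑ j ∈ range (k+1), ((-1:ℝ)^j * k.choose j) * ((-(j:ℝ)*t)^n / n.factorial))
      (∑ j ∈ range (k+1), ((-1:ℝ)^j * k.choose j) * Real.exp (-(j:ℝ)*t)) :=
    hasSum_sum fun j _ => (hj j).mul_left _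
  have h2 : (∑ j ∈ range (k+1), ((-1:ℝ)^j * k.choose j) * Real.exp (-(j:ℝ)*t))
      = (1 - Real.exp (-t))^k := by
    rw [sub_eq_add_neg, add_comm (1:ℝ), add_pow]
    refine Finset.sum_congr rfl fun j hj => ?_
    rw [show -(j:ℝ)*t = (j:ℝ)*(-t) by ring, Real.exp_nat_mul]
    rw [neg_pow]
    simp
    ring
  have h3 : ∀ n, ∑ j ∈ range (k+1), ((-1:ℝ)^j * k.choose j) * ((-(j:ℝ)*t)^n / n.factorial)
      = ((-1:ℝ)^(n+k) * k.factorial * S2 n k) * t^n / n.factorial := by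
    intro n
    have key : ∑ j ∈ range (k+1), ((-1:ℝ)^j * k.choose j) * ((-(j:ℝ)*t)^n / n.factorial)
        = ((-1:ℝ)^n * t^n / n.factorial)
          * ∑ j ∈ range (k+1), (-1:ℝ)^j * (k.choose j) * (j:ℝ)^n := by
      rw [Finset.mul_sum]
      refine Finset.sum_congr rfl fun j _ => ?_
      have hp : ((-(j:ℝ)) * t)^n = (-1:ℝ)^n * (j:ℝ)^n * t^n := by
        rw [show (-(j:ℝ)) * t = (-1) * ((j:ℝ) * t) by ring, mul_pow, mul_pow]; ring
      rw [hp]; ring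
    rw [key, A_eq n k, pow_add]
    ring
  rw [h2] at h1
  exact (funext h3 : _ = _) ▸ h1

lemma hasSum_stirling_abs (k : ℕ) (t : ℝ) :
    HasSum (fun n => ((k.factorial : ℝ) * S2 n k) * t^n / n.factorial)
      ((Real.exp t - 1)^k) := by
  have h := (hasSum_stirling k (-t)).mul_left ((-1:ℝ)^k)
  rw [neg_neg] at h
  have hterm : ∀ n, (-1:ℝ)^k * (((-1:ℝ)^(n+k) * k.factorial * S2 n k) * (-t)^n / n.factorial)
      = ((k.factorial : ℝ) * S2 n k) * t^n / n.factorial := by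
    intro n
    have hnn : ((-1:ℝ))^n * (-1)^n = 1 := by
      rw [← pow_add, ← two_mul, pow_mul, neg_one_sq, one_pow]
    have hkk : ((-1:ℝ))^k * (-1)^k = 1 := by
      rw [← pow_add, ← two_mul, pow_mul, neg_one_sq, one_pow]
    have hneg : ((-t)^n : ℝ) = (-1:ℝ)^n * t^n := by rw [neg_pow]
    have hadd : ((-1:ℝ))^(n+k) = (-1:ℝ)^n * (-1:ℝ)^k := pow_add _ _ _
    rw [hneg, hadd]
    calc (-1:ℝ)^k * (((-1:ℝ)^n*(-1:ℝ)^k * k.factorial * S2 n k) * ((-1:ℝ)^n * t^n) / n.factorial)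
        = ((-1:ℝ)^n*(-1:ℝ)^n) * ((-1:ℝ)^k*(-1:ℝ)^k)
            * (((k.factorial : ℝ) * S2 n k) * t^n / n.factorial) := by ring
      _ = _ := by rw [hnn, hkk]; ring
  have hsum : (-1:ℝ)^k * (1 - Real.exp t)^k = (Real.exp t - 1)^k := by
    rw [← neg_one_mul, ← mul_pow]; ring_nf
  rw [hsum] at h
  exact (funext hterm : _ = _) ▸ h


/-- Generating function identity: if `F_u` has radius of convergence `r > 0` and
`U_n = ((-1)^n/n!) ∑_k S(n,k) (-1)^k k! u_k`, then `∑ U_n t^n = F_u(1 - e^{-t})`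
for `0 ≤ t < log(1+r)`. -/
theorem sum_U_eq_Fu_comp (u : ℕ → ℝ) (r : ℝ) (hr : 0 < r)
    (hconv : ∀ x : ℝ, |x| < r → Summable fun p => u p * x ^ p)
    (U : ℕ → ℝ)
    (hU : ∀ n, U n = (-1) ^ n / n.factorial *
        ∑ k ∈ Finset.range (n + 1), (S2 n k : ℝ) * (-1) ^ k * k.factorial * u k)
    (t : ℝ) (ht : t ∈ Set.Ico 0 (Real.log (1 + r))) :
    HasSum (fun n => U n * t ^ n) (∑' k, u k * (1 - Real.exp (-t)) ^ k) := by
  obtain ⟨ht0, htlt⟩ := ht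
  set s : ℝ := Real.exp t - 1 with hs_def
  have hs0 : 0 ≤ s := by
    have := Real.one_le_exp ht0
    simp only [hs_def]; linarith
  have hsr : s < r := by
    have h1 : Real.exp t < 1 + r := by
      have := Real.exp_lt_exp.mpr htlt
      rwa [Real.exp_log (by linarith)] at this
    simp only [hs_def]; linarith
  -- Summability of |u k| * s^k
  have hsum_abs : Summable (fun k => |u k| * s ^ k) := by
    set y : ℝ := (s + r) / 2 with hy
    have hy0 : 0 < y := by simp only [hy]; linarith
    have hsy : s < y := by simp only [hy]; linarith
    have hyr : y < r := by simp only [hy]; linarith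
    have h := hconv y (by rw [abs_of_nonneg hy0.le]; exact hyr)
    have hten := h.tendsto_atTop_zero
    have hev : ∀ᶠ k in Filter.atTop, |u k * y ^ k| ≤ 1 := by
      filter_upwards [hten.eventually (Metric.ball_mem_nhds (0 : ℝ) one_pos)] with k hk
      rw [Real.dist_eq, sub_zero] at hk
      exact hk.le
    obtain ⟨N, hN⟩ := Filter.eventually_atTop.mp hev
    have hgeom : Summable (fun k : ℕ => (s / y) ^ k) :=
      summable_geometric_of_lt_one (by positivity) (by rw [div_lt_one hy0]; exact hsy)
    have key : ∀ m, N ≤ m → |u m| * s ^ m ≤ (s / y) ^ m := by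
      intro m hm
      have h1 : |u m| * y ^ m ≤ 1 := by
        have := hN m hm
        rwa [abs_mul, abs_of_nonneg (pow_nonneg hy0.le m)] at this
      have h3 : |u m| ≤ 1 / y ^ m := by
        rw [le_div_iff₀ (pow_pos hy0 m)]; exact h1
      calc |u m| * s ^ m ≤ (1 / y ^ m) * s ^ m :=
            mul_le_mul_of_nonneg_right h3 (pow_nonneg hs0 m)
        _ = (s / y) ^ m := by rw [one_div_mul_eq_div, ← div_pow]
    have hshift : Summable (fun k : ℕ => |u (k + N)| * s ^ (k + N)) := by
      refine Summable.of_nonneg_of_le (fun k => by positivity)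
        (fun k => key (k + N) (Nat.le_add_left N k)) ?_
      exact (summable_nat_add_iff N).mpr hgeom
    exact (summable_nat_add_iff N).mp hshift
  set x : ℝ := 1 - Real.exp (-t) with hx_def
  set g : ℕ × ℕ → ℝ := fun p =>
    u p.1 * (((-1 : ℝ) ^ (p.2 + p.1) * (p.1.factorial : ℝ) * S2 p.2 p.1)
      * t ^ p.2 / p.2.factorial) with hg_def
  have habs : ∀ p : ℕ × ℕ, |g p|
      = |u p.1| * (((p.1.factorial : ℝ) * S2 p.2 p.1) * t ^ p.2 / p.2.factorial) := by
    intro p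
    simp only [hg_def, abs_mul, abs_div, abs_pow, abs_neg, abs_one, one_pow, one_mul,
      Nat.abs_cast, abs_of_nonneg ht0]
  have hg : Summable g := by
    rw [← summable_abs_iff]
    rw [summable_prod_of_nonneg (fun p => abs_nonneg (g p))]
    constructor
    · intro k
      refine ((hasSum_stirling_abs k t).summable.mul_left |u k|).congr fun n => ?_
      exact (habs (k, n)).symm
    · have hts : ∀ k, ∑' n, |g (k, n)| = |u k| * s ^ k := by
        intro k
        have h := ((hasSum_stirling_abs k t).mul_left |u k|)
        have h2 : HasSum (fun n => |g (k, n)|) (|u k| * s ^ k) := by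
          refine h.congr_fun fun n => habs (k, n)
        exact h2.tsum_eq
      refine hsum_abs.congr fun k => ?_
      exact (hts k).symm
  obtain ⟨a, ha⟩ := hg
  have hfib1 : ∀ k, HasSum (fun n => g (k, n)) (u k * x ^ k) := fun k =>
    (hasSum_stirling k t).mul_left (u k)
  have hcol : HasSum (fun k => u k * x ^ k) a := ha.prod_fiberwise hfib1
  have hrow : ∀ n, HasSum (fun k => g (k, n)) (U n * t ^ n) := by
    intro n
    have hz : ∀ k ∉ range (n + 1), g (k, n) = 0 := by
      intro k hk
      rw [Finset.mem_range, not_lt] at hk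
      have : S2 n k = 0 := S2_eq_zero n k hk
      simp [hg_def, this]
    have hval : ∑ k ∈ range (n + 1), g (k, n) = U n * t ^ n := by
      rw [hU n, Finset.mul_sum, Finset.sum_mul]
      refine Finset.sum_congr rfl fun k _ => ?_
      simp only [hg_def, pow_add]
      ring
    exact hval ▸ hasSum_sum_of_ne_finset_zero hz
  have hswap : HasSum (fun p : ℕ × ℕ => g p.swap) a :=
    (Equiv.prodComm ℕ ℕ).hasSum_iff.mpr ha
  have hfinal : HasSum (fun n => U n * t ^ n) a := hswap.prod_fiberwise hrow
  rwa [hcol.tsum_eq]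
end

section
/- For all natural numbers n ≥ 0 and j ≥ 2, Σ_{k=j−1}^{n} S(n,k) · (−1)^k · k! · C(k,j−1) = (−1)^n · (j−1)! · S(n+1,j). -/
open Finset

lemma S2_gt : ∀ n k : ℕ, n < k → S2 n k = 0
  | 0, 0, h => by omega
  | 0, _ + 1, _ => rfl
  | n + 1, 0, h => by omega
  | n + 1, k + 1, h => by
    show S2 n k + (k + 1) * S2 n (k + 1) = 0
    rw [S2_gt n k (by omega), S2_gt n (k+1) (by omega), mul_zero]
    rfl

lemma key_binom (k m : ℕ) :
    (k+1).factorial * (k+1).choose m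
      = (k+1+m) * k.factorial * k.choose m + m * (k.factorial * k.choose (m-1)) := by
  cases m with
  | zero => simp [Nat.factorial_succ]
  | succ m' =>
    have h1 : (k+1).choose (m'+1) = k.choose m' + k.choose (m'+1) :=
      Nat.choose_succ_succ k m'
    have h2 : (m'+1) * k.choose (m'+1) + (m'+1) * k.choose m' = (k+1) * k.choose m' := by
      rcases le_or_gt m' k with h | h
      · have hcr := Nat.choose_succ_right_eq k m'
        rw [mul_comm (m'+1) (k.choose (m'+1)), hcr, mul_comm (m'+1) (k.choose m'),
          mul_comm (k+1) (k.choose m'), ← Nat.mul_add]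
        congr 1
        omega
      · rw [Nat.choose_eq_zero_of_lt h, Nat.choose_eq_zero_of_lt (by omega)]
        simp
    have : (k+1).factorial * (k+1).choose (m'+1)
        = (k+1) * k.factorial * k.choose (m'+1) + k.factorial * ((k+1) * k.choose m') := by
      rw [h1, Nat.factorial_succ]; ring
    rw [this, ← h2]
    simp only [Nat.succ_sub_one]
    ring

lemma main_sum (n : ℕ) : ∀ m : ℕ,
    ∑ k ∈ range (n+1), (S2 n k : ℤ) * (-1)^k * k.factorial * k.choose m
      = (-1)^n * m.factorial * S2 (n+1) (m+1) := by
  induction n with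
  | zero =>
    intro m
    cases m with
    | zero => simp [S2]
    | succ m => simp [S2, Nat.choose_eq_zero_of_lt (by omega : 0 < m + 1)]
  | succ n ih =>
    intro m
    set P : ℕ → ℤ := fun i => (S2 n i : ℤ) * (-1)^i * i.factorial * i.choose m with hP
    set Q : ℕ → ℤ := fun i => (S2 n i : ℤ) * (-1)^i * i.factorial * i.choose (m-1) with hQ
    set T : ℕ → ℤ := fun i => (i : ℤ) * ((S2 n i : ℤ) * (-1)^i * i.factorial * i.choose m)
      with hT
    have hreindex : ∑ i ∈ range (n+1), T (i+1) = ∑ i ∈ range (n+1), T i := by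
      have h2 : ∑ i ∈ range (n+2), T i = ∑ i ∈ range (n+1), T (i+1) + T 0 :=
        Finset.sum_range_succ' T (n+1)
      have h3 : ∑ i ∈ range (n+2), T i = ∑ i ∈ range (n+1), T i + T (n+1) :=
        Finset.sum_range_succ T (n+1)
      have h4 : T 0 = 0 := by simp [hT]
      have h5 : T (n+1) = 0 := by simp [hT, S2_gt n (n+1) (by omega)]
      rw [h4, add_zero] at h2
      rw [h5, add_zero] at h3
      omega
    have step : ∑ k ∈ range (n+2), (S2 (n+1) k : ℤ) * (-1)^k * k.factorial * k.choose m
        = -(m+1) * (∑ i ∈ range (n+1), P i) - m * (∑ i ∈ range (n+1), Q i) := by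
      rw [Finset.sum_range_succ'
        (fun k => (S2 (n+1) k : ℤ) * (-1)^k * k.factorial * k.choose m) (n+1)]
      have h0 : (S2 (n+1) 0 : ℤ) * (-1)^0 * (0:ℕ).factorial * (0:ℕ).choose m = 0 := by
        show ((0:ℕ) : ℤ) * (-1)^0 * (0:ℕ).factorial * (0:ℕ).choose m = 0
        simp
      rw [h0, add_zero]
      have hsplit : ∀ i ∈ range (n+1),
          (S2 (n+1) (i+1) : ℤ) * (-1)^(i+1) * (i+1).factorial * (i+1).choose m
            = (-(m+1) * P i - m * Q i - T i) + T (i+1) := by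
        intro i _
        have hrec : (S2 (n+1) (i+1) : ℤ) = S2 n i + (i+1) * S2 n (i+1) := by
          show ((S2 n i + (i + 1) * S2 n (i + 1) : ℕ) : ℤ) = _
          push_cast; ring
        have hkb : ((i+1).factorial * (i+1).choose m : ℤ)
            = (i+1+m) * i.factorial * i.choose m + m * (i.factorial * i.choose (m-1)) := by
          exact_mod_cast congrArg (Nat.cast : ℕ → ℤ) (key_binom i m)
        have expand : (S2 (n+1) (i+1) : ℤ) * (-1)^(i+1) * (i+1).factorial * (i+1).choose m
            = (S2 n i : ℤ) * (-1)^(i+1) * ((i+1).factorial * (i+1).choose m) + T (i+1) := by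
          rw [hrec, hT]; push_cast; ring
        rw [expand, hkb, hP, hQ, hT]
        push_cast
        ring
      rw [Finset.sum_congr rfl hsplit, Finset.sum_add_distrib, hreindex]
      rw [Finset.sum_sub_distrib, Finset.sum_sub_distrib, ← Finset.mul_sum, ← Finset.mul_sum]
      ring
    rw [step, ih m, ih (m-1)]
    have hS : (S2 (n+2) (m+1) : ℤ) = S2 (n+1) m + (m+1) * S2 (n+1) (m+1) := by
      show ((S2 (n+1) m + (m + 1) * S2 (n+1) (m+1) : ℕ) : ℤ) = _
      push_cast; ring
    cases m with
    | zero =>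
      have : (S2 (n+1) 0 : ℤ) = 0 := by norm_cast
      rw [hS]
      simp [this]
      ring
    | succ m' =>
      simp only [Nat.succ_sub_one] at *
      rw [hS]
      have hf : ((m'+1).factorial : ℤ) = (m'+1) * m'.factorial := by
        rw [Nat.factorial_succ]; push_cast; ring
      push_cast [hf]
      ring

/-- `∑_{k=j-1}^n S(n,k) (-1)^k k! C(k,j-1) = (-1)^n (j-1)! S(n+1,j)`. -/
theorem stirling_binom_sum (n j : ℕ) (hj : 2 ≤ j) :
    ∑ k ∈ Finset.Icc (j - 1) n,
        (S2 n k : ℤ) * (-1) ^ k * k.factorial * k.choose (j - 1)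
      = (-1) ^ n * (j - 1).factorial * S2 (n + 1) j := by
  obtain ⟨m, rfl⟩ : ∃ m, j = m + 1 := ⟨j - 1, by omega⟩
  simp only [Nat.add_sub_cancel]
  rw [← main_sum n m]
  apply Finset.sum_subset
  · intro x hx
    simp only [Finset.mem_Icc] at hx
    simp only [Finset.mem_range]
    omega
  · intro x hx hnx
    simp only [Finset.mem_range] at hx
    simp only [Finset.mem_Icc, not_and, not_le] at hnx
    have : x < m := by omega
    simp [Nat.choose_eq_zero_of_lt this]
end

section
/- For every natural number a ≥ 0, the limit as ε → 0⁺ of ( ε^a · e^{aε}/(e^ε − 1)^{a+1} − 1/ε ) equals (a−1)/2. -/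
open Filter

noncomputable def vvAux : ℝ → ℝ := fun x => if x = 0 then 1 else (Real.exp x - 1) / x

lemma vvAux_hasDeriv : HasDerivAt vvAux (1/2) 0 := by
  rw [hasDerivAt_iff_tendsto_slope]
  have key : Tendsto (fun x : ℝ => (Real.exp x - 1 - x) / x ^ 2)
      (nhdsWithin 0 {(0:ℝ)}ᶜ) (nhds (1/2)) := by
    have h0 : Tendsto (fun x : ℝ => (Real.exp x - 1 - x) / x ^ 2 - 1/2)
        (nhdsWithin 0 {(0:ℝ)}ᶜ) (nhds 0) := by
      refine squeeze_zero_norm' (a := fun x : ℝ => |x| * (2/9)) ?_ ?_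
      · have h1 : ∀ᶠ x : ℝ in nhdsWithin 0 {(0:ℝ)}ᶜ, |x| ≤ 1 := by
          apply eventually_nhdsWithin_of_eventually_nhds
          have : ∀ᶠ x : ℝ in nhds 0, x ∈ Metric.ball (0:ℝ) 1 :=
            Metric.ball_mem_nhds 0 one_pos
          filter_upwards [this] with x hx
          rw [Metric.mem_ball, Real.dist_eq, sub_zero] at hx
          exact hx.le
        filter_upwards [h1, self_mem_nhdsWithin] with x hx1 hx0
        have hx0' : x ≠ 0 := hx0
        have hb := Real.exp_bound hx1 (n := 3) (by norm_num)
        have hsum : ∑ m ∈ Finset.range 3, x ^ m / (m.factorial : ℝ)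
            = 1 + x + x^2/2 := by
          simp [Finset.sum_range_succ, Nat.factorial]
        rw [hsum] at hb
        have hx2 : (0:ℝ) < x ^ 2 := by positivity
        have heq : (Real.exp x - 1 - x) / x ^ 2 - 1/2
            = (Real.exp x - (1 + x + x^2/2)) / x ^ 2 := by
          field_simp
          ring
        rw [heq, Real.norm_eq_abs, abs_div, abs_of_pos hx2, div_le_iff₀ hx2]
        refine hb.trans (le_of_eq ?_)
        rw [pow_succ, sq_abs]
        norm_num [Nat.factorial]
        ring
      · have : Tendsto (fun x : ℝ => |x| * (2/9)) (nhds 0) (nhds (|(0:ℝ)| * (2/9))) := by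
          exact (continuous_abs.tendsto 0).mul tendsto_const_nhds
        simpa using this.mono_left nhdsWithin_le_nhds
    have := h0.add (tendsto_const_nhds (x := (1/2 : ℝ)))
    simpa using this
  apply key.congr'
  filter_upwards [self_mem_nhdsWithin] with x hx
  have hx0 : x ≠ 0 := hx
  have hv0 : vvAux 0 = 1 := by norm_num [vvAux]
  rw [slope_def_field, hv0]
  simp only [vvAux, if_neg hx0, sub_zero]
  rw [sq, ← div_div, sub_div, div_self hx0]

/-- `ε^a e^{aε}/(e^ε-1)^{a+1} = 1/ε + (a-1)/2 + o(1)` as `ε → 0⁺`. -/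
theorem exp_quotient_asymptotic (a : ℕ) :
    Tendsto
      (fun ε : ℝ => ε ^ a * Real.exp (a * ε) / (Real.exp ε - 1) ^ (a + 1) - 1 / ε)
      (nhdsWithin 0 (Set.Ioi 0)) (nhds (((a : ℝ) - 1) / 2)) := by
  set G : ℝ → ℝ := fun x => Real.exp (a * x) - vvAux x ^ (a + 1) with hG
  have hGd : HasDerivAt G (((a:ℝ) - 1) / 2) 0 := by
    have h1 : HasDerivAt (fun x : ℝ => Real.exp (a * x)) (a : ℝ) 0 := by
      have := ((hasDerivAt_id (0:ℝ)).const_mul (a:ℝ)).exp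
      simpa using this
    have h2 : HasDerivAt (fun x : ℝ => vvAux x ^ (a + 1))
        ((a + 1 : ℕ) * vvAux 0 ^ a * (1/2)) 0 := by
      simpa using vvAux_hasDeriv.fun_pow (a + 1)
    have hv0 : vvAux 0 = 1 := by simp [vvAux]
    have := h1.sub h2
    have key : ((a:ℝ) - 1) / 2 = (a:ℝ) - ((a + 1 : ℕ) : ℝ) * vvAux 0 ^ a * (1 / 2) := by
      rw [hv0]
      push_cast
      ring
    rw [key]
    exact this
  have hG0 : G 0 = 0 := by simp [hG, vvAux]
  have hslope : Tendsto (slope G 0) (nhdsWithin 0 (Set.Ioi 0)) (nhds (((a:ℝ) - 1) / 2)) := by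
    have := hasDerivAt_iff_tendsto_slope.mp hGd
    exact this.mono_left (nhdsWithin_mono 0 (fun x hx => ne_of_gt hx))
  have hv0 : vvAux 0 = 1 := by simp [vvAux]
  have hvcont : Tendsto (fun x => (vvAux x ^ (a + 1))⁻¹)
      (nhdsWithin 0 (Set.Ioi 0)) (nhds 1) := by
    have h1 : Tendsto vvAux (nhds 0) (nhds 1) := by
      have := vvAux_hasDeriv.continuousAt.tendsto
      rwa [hv0] at this
    have h2 : Tendsto (fun x => (vvAux x ^ (a + 1))⁻¹)
        (nhdsWithin 0 (Set.Ioi 0)) (nhds ((1:ℝ) ^ (a + 1))⁻¹) :=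
      ((h1.pow (a + 1)).inv₀ (by norm_num)).mono_left nhdsWithin_le_nhds
    simpa using h2
  have hmul := hslope.mul hvcont
  rw [mul_one] at hmul
  apply hmul.congr'
  filter_upwards [self_mem_nhdsWithin] with x hx
  have hx0 : (0:ℝ) < x := hx
  have hx0' : x ≠ 0 := ne_of_gt hx0
  have hex : 0 < Real.exp x - 1 := by
    have : 1 < Real.exp x := Real.one_lt_exp_iff.mpr hx0
    linarith
  have hvx : vvAux x = (Real.exp x - 1) / x := by simp [vvAux, hx0']
  have hvpos : 0 < vvAux x := by rw [hvx]; positivity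
  have hkey : Real.exp x - 1 = x * vvAux x := by
    rw [hvx]; field_simp
  rw [slope_def_field, hG0, sub_zero, sub_zero, hG, hkey]
  have hvne : vvAux x ≠ 0 := ne_of_gt hvpos
  field_simp
  ring
end

section
/- The limit as ε → 0⁺ of ( ∫_ε^∞ 1/(e^t − 1)² dt − 1/ε − log ε ) equals −1/2. -/
open MeasureTheory Filter

noncomputable def Fanti (x : ℝ) : ℝ :=
  -(Real.exp x - 1)⁻¹ + x - Real.log (Real.exp x - 1)

lemma exp_sub_one_pos {x : ℝ} (hx : 0 < x) : 0 < Real.exp x - 1 := by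
  linarith [Real.add_one_le_exp x]

lemma hasDerivAt_Fanti {x : ℝ} (hx : 0 < x) :
    HasDerivAt Fanti (1 / (Real.exp x - 1) ^ 2) x := by
  have h1 : 0 < Real.exp x - 1 := exp_sub_one_pos hx
  have hne : Real.exp x - 1 ≠ 0 := h1.ne'
  have hE : HasDerivAt (fun y : ℝ => Real.exp y - 1) (Real.exp x) x :=
    (Real.hasDerivAt_exp x).sub_const 1
  have hInv : HasDerivAt (fun y : ℝ => (Real.exp y - 1)⁻¹)
      (-Real.exp x / (Real.exp x - 1) ^ 2) x := by
    simpa [Pi.inv_def] using hE.inv hne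
  have hLog : HasDerivAt (fun y : ℝ => Real.log (Real.exp y - 1))
      (Real.exp x / (Real.exp x - 1)) x := hE.log hne
  have h : HasDerivAt Fanti
      (-(-Real.exp x / (Real.exp x - 1) ^ 2) + 1 - Real.exp x / (Real.exp x - 1)) x := by
    show HasDerivAt (fun y => -(Real.exp y - 1)⁻¹ + y - Real.log (Real.exp y - 1)) _ x
    simpa [Fanti, Pi.neg_def, Pi.add_def, Pi.sub_def] using (hInv.neg.add (hasDerivAt_id x)).sub hLog
  convert h using 1
  field_simp
  ring

lemma integral_eq {ε : ℝ} (hε : 0 < ε) :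
    (∫ t in Set.Ioi ε, 1 / (Real.exp t - 1) ^ 2) = -Fanti ε := by
  have hcont : ContinuousWithinAt Fanti (Set.Ici ε) ε :=
    (hasDerivAt_Fanti hε).continuousAt.continuousWithinAt
  have hderiv : ∀ x ∈ Set.Ioi ε, HasDerivAt Fanti (1 / (Real.exp x - 1) ^ 2) x :=
    fun x hx => hasDerivAt_Fanti (hε.trans hx)
  have hpos : ∀ x ∈ Set.Ioi ε, 0 ≤ 1 / (Real.exp x - 1) ^ 2 := fun x _ => by positivity
  have hlim : Tendsto Fanti atTop (nhds 0) := by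
    have h1 : Tendsto (fun x : ℝ => -(Real.exp x - 1)⁻¹) atTop (nhds 0) := by
      have : Tendsto (fun x : ℝ => Real.exp x - 1) atTop atTop :=
        Real.tendsto_exp_atTop.atTop_add tendsto_const_nhds
      simpa using (tendsto_inv_atTop_zero.comp this).neg
    have h2 : Tendsto (fun x : ℝ => x - Real.log (Real.exp x - 1)) atTop (nhds 0) := by
      have key : ∀ᶠ x : ℝ in atTop, x - Real.log (Real.exp x - 1) =
          -Real.log (1 - Real.exp (-x)) := by
        filter_upwards [eventually_gt_atTop 0] with x hx
        have h1 : 0 < Real.exp x - 1 := exp_sub_one_pos hx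
        have h2 : Real.exp x - 1 = Real.exp x * (1 - Real.exp (-x)) := by
          rw [Real.exp_neg]; field_simp
        rw [h2, Real.log_mul (Real.exp_pos x).ne' (by nlinarith [Real.exp_pos x]),
          Real.log_exp]
        ring
      rw [tendsto_congr' key]
      have : Tendsto (fun x : ℝ => 1 - Real.exp (-x)) atTop (nhds 1) := by
        simpa using (Real.tendsto_exp_atBot.comp tendsto_neg_atTop_atBot).const_sub 1
      have := ((Real.continuousAt_log one_ne_zero).tendsto.comp this).neg
      simpa using this
    have heq : Fanti = fun x => -(Real.exp x - 1)⁻¹ + (x - Real.log (Real.exp x - 1)) := by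
      funext x; simp only [Fanti]; ring
    rw [heq]
    simpa using h1.add h2
  have := integral_Ioi_of_hasDerivAt_of_nonneg hcont hderiv hpos hlim
  rw [this]; ring

lemma tendsto_B : Tendsto (fun ε : ℝ => (Real.exp ε - 1) / ε)
    (nhdsWithin 0 (Set.Ioi 0)) (nhds 1) := by
  have h := (Real.hasDerivAt_exp 0).tendsto_slope_zero_right
  simpa [Real.exp_zero, div_eq_inv_mul] using h

/-- `∫_ε^∞ dt/(e^t-1)² = 1/ε + log(ε) - 1/2 + o(1)` as `ε → 0⁺`. -/
theorem integral_inv_exp_sub_one_sq_asymptotic :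
    Tendsto
      (fun ε : ℝ =>
        (∫ t in Set.Ioi ε, 1 / (Real.exp t - 1) ^ 2) - 1 / ε - Real.log ε)
      (nhdsWithin 0 (Set.Ioi 0)) (nhds (-1 / 2)) := by
  have hB := tendsto_B
  -- A := (1 + ε - exp ε)/ε² → -1/2
  have hA : Tendsto (fun ε : ℝ => (1 + ε - Real.exp ε) / ε ^ 2)
      (nhdsWithin 0 (Set.Ioi 0)) (nhds (-1 / 2)) := by
    rw [tendsto_iff_dist_tendsto_zero]
    have hg0 : Tendsto (fun ε : ℝ => (2/9 : ℝ) * ε) (nhdsWithin 0 (Set.Ioi 0)) (nhds 0) := by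
      have h0 : Tendsto (fun ε : ℝ => ε) (nhdsWithin 0 (Set.Ioi 0)) (nhds 0) :=
        tendsto_id.mono_left nhdsWithin_le_nhds
      simpa using h0.const_mul (2/9 : ℝ)
    apply squeeze_zero' (.of_forall fun ε => dist_nonneg) ?_ hg0
    filter_upwards [Ioo_mem_nhdsGT_of_mem (by norm_num : (0:ℝ) ∈ Set.Ico 0 1)]
      with ε hεm
    obtain ⟨hε0, hε1⟩ := hεm
    have habs : |ε| ≤ 1 := by rw [abs_of_pos hε0]; linarith
    have hb := Real.exp_bound habs (by norm_num : 0 < 3)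
    have hsum : (∑ i ∈ Finset.range 3, ε ^ i / (i.factorial : ℝ)) = 1 + ε + ε ^ 2 / 2 := by
      norm_num [Finset.sum_range_succ, Nat.factorial]
    rw [hsum, abs_of_pos hε0] at hb
    have hb' : |Real.exp ε - (1 + ε + ε ^ 2 / 2)| ≤ (2/9) * ε ^ 3 := by
      refine hb.trans (le_of_eq ?_)
      norm_num [Nat.factorial]
      ring
    rw [Real.dist_eq]
    have hε2 : (0:ℝ) < ε ^ 2 := by positivity
    have heq : (1 + ε - Real.exp ε) / ε ^ 2 - -1/2
        = -(Real.exp ε - (1 + ε + ε ^ 2 / 2)) / ε ^ 2 := by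
      field_simp; ring
    rw [heq, abs_div, abs_of_pos hε2, abs_neg, div_le_iff₀ hε2]
    calc |Real.exp ε - (1 + ε + ε ^ 2 / 2)| ≤ (2/9) * ε ^ 3 := hb'
      _ = 2/9 * ε * ε ^ 2 := by ring
  -- 1/(exp ε - 1) - 1/ε → -1/2
  have hMain : Tendsto (fun ε : ℝ => 1 / (Real.exp ε - 1) - 1 / ε)
      (nhdsWithin 0 (Set.Ioi 0)) (nhds (-1 / 2)) := by
    have hBinv : Tendsto (fun ε : ℝ => ε / (Real.exp ε - 1))
        (nhdsWithin 0 (Set.Ioi 0)) (nhds 1) := by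
      have h := hB.inv₀ one_ne_zero
      rw [tendsto_congr' ?_] at h
      · simpa using h
      · filter_upwards [self_mem_nhdsWithin] with ε (hε : 0 < ε)
        rw [inv_div]
    have h := hA.mul hBinv
    rw [tendsto_congr' ?_] at h
    · simpa using h
    · filter_upwards [self_mem_nhdsWithin] with ε (hε : 0 < ε)
      have h1 := exp_sub_one_pos hε
      field_simp
      ring
  -- log(exp ε - 1) - log ε → 0
  have hLog : Tendsto (fun ε : ℝ => Real.log (Real.exp ε - 1) - Real.log ε)
      (nhdsWithin 0 (Set.Ioi 0)) (nhds 0) := by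
    have h := (Real.continuousAt_log one_ne_zero).tendsto.comp hB
    rw [tendsto_congr' ?_] at h
    · simpa using h
    · filter_upwards [self_mem_nhdsWithin] with ε (hε : 0 < ε)
      simp only [Function.comp_apply]
      rw [Real.log_div (exp_sub_one_pos hε).ne' hε.ne']
  have hId : Tendsto (fun ε : ℝ => ε) (nhdsWithin 0 (Set.Ioi 0)) (nhds 0) :=
    tendsto_id.mono_left nhdsWithin_le_nhds
  have hTotal : Tendsto
      (fun ε : ℝ => 1 / (Real.exp ε - 1) - 1 / ε + (Real.log (Real.exp ε - 1) - Real.log ε) - ε)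
      (nhdsWithin 0 (Set.Ioi 0)) (nhds (-1 / 2)) := by
    simpa using (hMain.add hLog).sub hId
  refine hTotal.congr' ?_
  filter_upwards [self_mem_nhdsWithin] with ε (hε : 0 < ε)
  rw [integral_eq hε]
  simp only [Fanti]
  ring
end
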